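/- arXiv:2507.10296 — 9 statements merged into one kernel-verified Lean document; each statement's English description precedes it below -/
import Mathlib

section
/- Let R be a finite nonempty set, u : R → ℝ a utility function, λ > 0, and let OPT = min_{r∈R} u(r). If r* is sampled by the exponential mechanism, i.e. with probability proportional to exp(−u(r)/λ), then for every t > 0 the probability that u(r*) ≥ OPT + λ·(ln|R| + t) is at most e^{−t}. -/
open Finset

/-- **Utility of the exponential mechanism (tail bound).**
Let `R` be a finite nonempty set, `u : R → ℝ` a utility function, `lam > 0`, and
`OPT = min_{r ∈ R} u r`.  If `r*` is sampled with probability proportional to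
`exp (-u r / lam)`, then for every `t > 0` the probability that
`u r* ≥ OPT + lam * (ln |R| + t)` is at most `exp (-t)`. -/
theorem exponential_mechanism_tail_bound
    {R : Type*} [Fintype R] [Nonempty R] (u : R → ℝ) (lam : ℝ) (hlam : 0 < lam)
    (OPT : ℝ) (hOPT : OPT = Finset.univ.inf' Finset.univ_nonempty u)
    (t : ℝ) (ht : 0 < t) :
    (∑ r ∈ Finset.univ.filter
        (fun r => OPT + lam * (Real.log (Fintype.card R) + t) ≤ u r),
        Real.exp (-u r / lam)) / (∑ r : R, Real.exp (-u r / lam))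
      ≤ Real.exp (-t) := by
  set N := Fintype.card R with hN
  have hNpos : (0 : ℝ) < N := by
    exact_mod_cast Fintype.card_pos
  set c : ℝ := OPT + lam * (Real.log N + t) with hc
  -- denominator positivity and lower bound
  obtain ⟨r₀, -, hr₀⟩ := Finset.exists_mem_eq_inf' (Finset.univ_nonempty (α := R)) u
  have hdenom_pos : 0 < ∑ r : R, Real.exp (-u r / lam) :=
    Finset.sum_pos (fun r _ => Real.exp_pos _) Finset.univ_nonempty
  have hdenom_ge : Real.exp (-OPT / lam) ≤ ∑ r : R, Real.exp (-u r / lam) := by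
    have := Finset.single_le_sum (f := fun r => Real.exp (-u r / lam))
      (fun r _ => (Real.exp_pos _).le) (Finset.mem_univ r₀)
    rwa [hOPT, hr₀]
  -- numerator upper bound
  have hnum : (∑ r ∈ Finset.univ.filter (fun r => c ≤ u r), Real.exp (-u r / lam))
      ≤ N * Real.exp (-c / lam) := by
    calc (∑ r ∈ Finset.univ.filter (fun r => c ≤ u r), Real.exp (-u r / lam))
        ≤ ∑ _r ∈ Finset.univ.filter (fun r => c ≤ u r), Real.exp (-c / lam) := by
          apply Finset.sum_le_sum
          intro r hr
          have hcu : c ≤ u r := (Finset.mem_filter.mp hr).2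
          apply Real.exp_le_exp.mpr
          apply div_le_div_of_nonneg_right (by linarith) hlam.le
      _ = (Finset.univ.filter (fun r => c ≤ u r)).card * Real.exp (-c / lam) := by
          rw [Finset.sum_const, nsmul_eq_mul]
      _ ≤ N * Real.exp (-c / lam) := by
          apply mul_le_mul_of_nonneg_right _ (Real.exp_pos _).le
          exact_mod_cast Finset.card_filter_le _ _
  -- key identity
  have hkey : N * Real.exp (-c / lam) = Real.exp (-t) * Real.exp (-OPT / lam) := by
    have : -c / lam = -OPT / lam - Real.log N - t := by
      field_simp [hc]; ring
    rw [this, Real.exp_sub, Real.exp_sub, Real.exp_log hNpos, Real.exp_neg t]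
    field_simp
  rw [div_le_iff₀ hdenom_pos]
  calc (∑ r ∈ Finset.univ.filter (fun r => c ≤ u r), Real.exp (-u r / lam))
      ≤ N * Real.exp (-c / lam) := hnum
    _ = Real.exp (-t) * Real.exp (-OPT / lam) := hkey
    _ ≤ Real.exp (-t) * ∑ r : R, Real.exp (-u r / lam) := by
        exact mul_le_mul_of_nonneg_left hdenom_ge (Real.exp_pos _).le
end

section
/- Let R be a finite nonempty set, u : R → ℝ a utility function, λ > 0, and let OPT = min_{r∈R} u(r). If r* is sampled by the exponential mechanism, i.e. with probability proportional to exp(−u(r)/λ), then the expected utility satisfies E[u(r*)] ≤ OPT + λ·(ln|R| + 1). -/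
/-!
Sampling proportionally to `exp (-u r / λ)` is sampling from the Gibbs distribution `p`, for which
`log p r = -u r / λ - log Z` with `Z` the partition function. Averaging against `p` gives the
free-energy identity `E[u] = λ H(p) - λ log Z`. The entropy `H(p)` is at most `log |R|` by
concavity of `x ↦ -x log x`, and `Z ≥ exp (-OPT / λ)` because `Z` contains the term of a minimiser,
so `E[u] ≤ OPT + λ log |R|`, which is even sharper than the claim.
-/

open Finset Real

lemma sum_negMulLog_le_log_card {ι : Type*} [Fintype ι] {p : ι → ℝ} (hp₀ : ∀ i, 0 ≤ p i)
    (hp₁ : ∑ i, p i = 1) : ∑ i, negMulLog (p i) ≤ log (Fintype.card ι) := by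
  set n : ℝ := (Fintype.card ι : ℝ)
  have hn : 0 < n := by
    obtain ⟨i, -, -⟩ := exists_ne_zero_of_sum_ne_zero (hp₁ ▸ one_ne_zero)
    exact Nat.cast_pos.2 (Fintype.card_pos_iff.2 ⟨i⟩)
  have uniform_weights : ∑ _i : ι, n⁻¹ = 1 := by simp [n, hn.ne']
  have jensen := concaveOn_negMulLog.le_map_sum (t := univ) (w := fun _ => n⁻¹) (p := p)
    (fun _ _ => inv_nonneg.2 hn.le) uniform_weights (fun i _ => Set.mem_Ici.2 (hp₀ i))
  have negMulLog_inv : negMulLog n⁻¹ = n⁻¹ * log n := by simp [negMulLog, log_inv]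
  simp only [smul_eq_mul, ← mul_sum, hp₁, mul_one, negMulLog_inv] at jensen
  exact le_of_mul_le_mul_left jensen (inv_pos.2 hn)

section Gibbs

variable {ι : Type*} [Fintype ι] (u : ι → ℝ) (lam : ℝ)

noncomputable def partitionFunction : ℝ := ∑ i, exp (-u i / lam)

noncomputable def gibbs (i : ι) : ℝ := exp (-u i / lam) / partitionFunction u lam

variable [Nonempty ι]

lemma partitionFunction_pos : 0 < partitionFunction u lam :=
  sum_pos (fun _ _ => exp_pos _) univ_nonempty

lemma gibbs_pos (i : ι) : 0 < gibbs u lam i :=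
  div_pos (exp_pos _) (partitionFunction_pos u lam)

lemma sum_gibbs : ∑ i, gibbs u lam i = 1 := by
  simp only [gibbs, ← sum_div]
  exact div_self (partitionFunction_pos u lam).ne'

lemma log_gibbs (i : ι) :
    log (gibbs u lam i) = -u i / lam - log (partitionFunction u lam) := by
  rw [gibbs, log_div (exp_ne_zero _) (partitionFunction_pos u lam).ne', log_exp]

variable {lam}

lemma sum_gibbs_mul_eq (hlam : lam ≠ 0) :
    ∑ i, gibbs u lam i * u i =
      lam * ∑ i, negMulLog (gibbs u lam i) - lam * log (partitionFunction u lam) := by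
  have pointwise (i : ι) : gibbs u lam i * u i =
      lam * negMulLog (gibbs u lam i) - lam * log (partitionFunction u lam) * gibbs u lam i := by
    rw [negMulLog, log_gibbs]
    field_simp
    ring
  simp only [pointwise, sum_sub_distrib, ← mul_sum, sum_gibbs, mul_one]

lemma neg_mul_log_partitionFunction_le (hlam : 0 < lam) :
    -lam * log (partitionFunction u lam) ≤ univ.inf' univ_nonempty u := by
  obtain ⟨i, -, hi⟩ := exists_mem_eq_inf' univ_nonempty u
  have term_le : exp (-u i / lam) ≤ partitionFunction u lam :=
    single_le_sum (f := fun i => exp (-u i / lam)) (fun _ _ => (exp_pos _).le) (mem_univ i)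
  have log_ge := (le_log_iff_exp_le (partitionFunction_pos u lam)).2 term_le
  rw [div_le_iff₀ hlam] at log_ge
  linarith

theorem sum_gibbs_mul_le (hlam : 0 < lam) :
    ∑ i, gibbs u lam i * u i ≤ univ.inf' univ_nonempty u + lam * log (Fintype.card ι) := by
  have entropy_le := sum_negMulLog_le_log_card (fun i => (gibbs_pos u lam i).le) (sum_gibbs u lam)
  rw [sum_gibbs_mul_eq u hlam.ne']
  nlinarith [neg_mul_log_partitionFunction_le u hlam]

end Gibbs

/-- **Utility of the exponential mechanism (expectation bound).**
Let `R` be a finite nonempty set, `u : R → ℝ`, `lam > 0`, and `OPT = min_{r ∈ R} u r`.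
If `r*` is sampled with probability proportional to `exp (-u r / lam)`, then
`E[u r*] ≤ OPT + lam * (ln |R| + 1)`. -/
theorem exponential_mechanism_expectation_bound
    {R : Type*} [Fintype R] [Nonempty R] (u : R → ℝ) (lam : ℝ) (hlam : 0 < lam)
    (OPT : ℝ) (hOPT : OPT = Finset.univ.inf' Finset.univ_nonempty u) :
    (∑ r : R, (Real.exp (-u r / lam) / ∑ p : R, Real.exp (-u p / lam)) * u r)
      ≤ OPT + lam * (Real.log (Fintype.card R) + 1) := by
  subst hOPT
  exact (sum_gibbs_mul_le u hlam).trans (by linarith)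
end

section
/- Let R be a finite set with |R| = n ≥ 2, u : R → ℝ a utility function with OPT = min_{r∈R} u(r) > 0, let ε > 0, and let λ satisfy 0 < λ ≤ ε·OPT/(3 ln n). If r* is sampled by the exponential mechanism, i.e. with probability proportional to exp(−u(r)/λ), then the probability that u(r*) > (1+ε)·OPT is at most 1/n². -/
open Finset

/-- **Exponential mechanism, relative-error tail bound.**
Let `R` be a finite set with `|R| = n ≥ 2`, `u : R → ℝ` with `OPT = min u > 0`,
`ε > 0`, and `0 < lam ≤ ε · OPT / (3 ln n)`.  If `r*` is sampled with probability
proportional to `exp (-u r / lam)`, then `Pr[u r* > (1+ε)·OPT] ≤ 1/n²`. -/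
theorem exponential_mechanism_relative_tail_bound
    {R : Type*} [Fintype R] [Nonempty R] (n : ℕ) (hn : Fintype.card R = n) (hn2 : 2 ≤ n)
    (u : R → ℝ) (OPT : ℝ) (hOPT : OPT = Finset.univ.inf' Finset.univ_nonempty u)
    (hOPTpos : 0 < OPT)
    (eps lam : ℝ) (heps : 0 < eps) (hlam : 0 < lam)
    (hlam' : lam ≤ eps * OPT / (3 * Real.log n)) :
    (∑ r ∈ Finset.univ.filter (fun r => (1 + eps) * OPT < u r),
        Real.exp (-u r / lam)) / (∑ r : R, Real.exp (-u r / lam))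
      ≤ 1 / (n : ℝ) ^ 2 := by
  have hn1 : (1:ℝ) < (n:ℝ) := by exact_mod_cast lt_of_lt_of_le one_lt_two hn2
  have hnpos : (0:ℝ) < (n:ℝ) := lt_trans one_pos hn1
  have hlogn : 0 < Real.log n := Real.log_pos hn1
  have hkey : 3 * Real.log n ≤ eps * OPT / lam := by
    rw [le_div_iff₀ hlam]
    have h := (le_div_iff₀ (by positivity : (0:ℝ) < 3 * Real.log n)).mp hlam'
    linarith [h]
  -- denominator lower bound
  obtain ⟨r0, _, hr0⟩ := Finset.exists_mem_eq_inf' Finset.univ_nonempty u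
  have hur0 : u r0 = OPT := by rw [hOPT, hr0]
  have hden : Real.exp (-OPT / lam) ≤ ∑ r : R, Real.exp (-u r / lam) := by
    rw [← hur0]
    exact Finset.single_le_sum (f := fun r => Real.exp (-u r / lam)) (fun i _ => (Real.exp_pos _).le) (Finset.mem_univ r0)
  have hdenpos : 0 < ∑ r : R, Real.exp (-u r / lam) :=
    lt_of_lt_of_le (Real.exp_pos _) hden
  -- numerator upper bound
  have hnum : (∑ r ∈ Finset.univ.filter (fun r => (1 + eps) * OPT < u r),
      Real.exp (-u r / lam)) ≤ (n:ℝ) * Real.exp (-(1 + eps) * OPT / lam) := by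
    calc (∑ r ∈ Finset.univ.filter (fun r => (1 + eps) * OPT < u r),
        Real.exp (-u r / lam))
        ≤ ∑ r ∈ Finset.univ.filter (fun r => (1 + eps) * OPT < u r),
            Real.exp (-(1 + eps) * OPT / lam) := by
          apply Finset.sum_le_sum
          intro r hr
          have hr' := (Finset.mem_filter.mp hr).2
          apply Real.exp_le_exp.mpr
          apply div_le_div_of_nonneg_right _ hlam.le
          linarith
      _ = ((Finset.univ.filter (fun r => (1 + eps) * OPT < u r)).card : ℝ)
            * Real.exp (-(1 + eps) * OPT / lam) := by
          rw [Finset.sum_const, nsmul_eq_mul]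
      _ ≤ (n:ℝ) * Real.exp (-(1 + eps) * OPT / lam) := by
          apply mul_le_mul_of_nonneg_right _ (Real.exp_pos _).le
          have := Finset.card_filter_le (Finset.univ : Finset R)
            (fun r => (1 + eps) * OPT < u r)
          rw [Finset.card_univ, hn] at this
          exact_mod_cast this
  calc (∑ r ∈ Finset.univ.filter (fun r => (1 + eps) * OPT < u r),
      Real.exp (-u r / lam)) / (∑ r : R, Real.exp (-u r / lam))
      ≤ ((n:ℝ) * Real.exp (-(1 + eps) * OPT / lam)) / Real.exp (-OPT / lam) := by
        apply div_le_div₀ (by positivity) hnum (Real.exp_pos _) hden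
    _ = (n:ℝ) * Real.exp (-(eps * OPT / lam)) := by
        rw [mul_div_assoc, ← Real.exp_sub]
        ring_nf
    _ ≤ (n:ℝ) * Real.exp (-(3 * Real.log n)) := by
        apply mul_le_mul_of_nonneg_left _ hnpos.le
        exact Real.exp_le_exp.mpr (by linarith)
    _ = 1 / (n:ℝ) ^ 2 := by
        rw [show (3:ℝ) * Real.log n = Real.log ((n:ℝ)^3) by
            rw [Real.log_pow]; push_cast; ring,
          Real.exp_neg, Real.exp_log (by positivity)]
        field_simp
end

section
/- Let R be a finite set with |R| = n ≥ 2, u : R → ℝ a utility function with OPT = min_{r∈R} u(r) > 0, let ε > 0, and let λ satisfy 0 < λ ≤ ε·OPT/(3 ln n). If r* is sampled by the exponential mechanism, i.e. with probability proportional to exp(−u(r)/λ), then the expected utility satisfies E[u(r*)] ≤ (1+ε)·OPT. -/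
/-!
Write `t = u r - OPT` and `p r` for the output probability of `r`. Since the normaliser is at least
`exp (-OPT / lam)`, we have `p r ≤ exp (-t / lam)`. Split at the threshold `s = 2 lam ln n`: outputs
with `t ≤ s` contribute at most `s` to `E[t]` in total, and since `t ↦ t exp (-t / lam)` decreases
on `[lam, ∞)`, each output with `t > s` contributes at most `s exp (-s / lam) = s / n²`. Hence
`E[u] ≤ OPT + s + s / n ≤ OPT + 3 lam ln n ≤ (1 + ε) OPT`.
-/

open Finset Real

lemma mul_exp_neg_div_le_of_le {lam s t : ℝ} (hlam : 0 < lam) (hs : lam ≤ s) (hst : s ≤ t) :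
    t * exp (-t / lam) ≤ s * exp (-s / lam) := by
  have hs_pos : 0 < s := hlam.trans_le hs
  have ht_le : t ≤ s * exp ((t - s) / lam) :=
    calc t = s * ((t - s) / s + 1) := by field_simp; ring
      _ ≤ s * ((t - s) / lam + 1) := by gcongr
      _ ≤ s * exp ((t - s) / lam) := by gcongr; exact add_one_le_exp _
  calc t * exp (-t / lam) ≤ s * exp ((t - s) / lam) * exp (-t / lam) := by gcongr
    _ = s * exp (-s / lam) := by rw [mul_assoc, ← exp_add]; ring_nf

section Gibbs

variable {R : Type*} [Fintype R]

/-- The output distribution of the exponential mechanism. -/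
noncomputable def gibbsWeight (u : R → ℝ) (lam : ℝ) (r : R) : ℝ :=
  exp (-u r / lam) / ∑ p : R, exp (-u p / lam)

variable (u : R → ℝ) (lam : ℝ)

lemma gibbsWeight_nonneg (r : R) : 0 ≤ gibbsWeight u lam r := by
  unfold gibbsWeight; positivity

lemma sum_gibbsWeight [Nonempty R] : ∑ r, gibbsWeight u lam r = 1 := by
  unfold gibbsWeight
  rw [← sum_div, div_self (sum_pos (fun p _ ↦ exp_pos _) univ_nonempty).ne']

lemma gibbsWeight_le_exp (r r₀ : R) : gibbsWeight u lam r ≤ exp (-(u r - u r₀) / lam) := by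
  have hr₀ : exp (-u r₀ / lam) ≤ ∑ p : R, exp (-u p / lam) :=
    single_le_sum (f := fun p ↦ exp (-u p / lam)) (fun p _ ↦ (exp_pos _).le) (mem_univ r₀)
  calc gibbsWeight u lam r ≤ exp (-u r / lam) / exp (-u r₀ / lam) :=
        div_le_div_of_nonneg_left (exp_pos _).le (exp_pos _) hr₀
    _ = exp (-(u r - u r₀) / lam) := by rw [← exp_sub]; ring_nf

variable {u lam}

lemma gibbsWeight_mul_sub_le {s : ℝ} (hlam : 0 < lam) (hs : lam ≤ s) (r r₀ : R) :
    gibbsWeight u lam r * (u r - u r₀) ≤ s * gibbsWeight u lam r + s * exp (-s / lam) := by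
  have hp := gibbsWeight_nonneg u lam r
  have hs_pos : 0 < s := hlam.trans_le hs
  rcases le_or_gt (u r - u r₀) s with hsmall | hlarge
  · nlinarith [mul_pos hs_pos (exp_pos (-s / lam))]
  · calc gibbsWeight u lam r * (u r - u r₀)
        ≤ (u r - u r₀) * exp (-(u r - u r₀) / lam) := by
          rw [mul_comm]; gcongr
          · linarith
          · exact gibbsWeight_le_exp u lam r r₀
      _ ≤ s * exp (-s / lam) := mul_exp_neg_div_le_of_le hlam hs hlarge.le
      _ ≤ s * gibbsWeight u lam r + s * exp (-s / lam) := by nlinarith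

lemma sum_gibbsWeight_mul_le [Nonempty R] {s : ℝ} (hlam : 0 < lam) (hs : lam ≤ s) (r₀ : R) :
    ∑ r, gibbsWeight u lam r * u r ≤ u r₀ + s + Fintype.card R * (s * exp (-s / lam)) := by
  have hsplit : ∑ r, gibbsWeight u lam r * u r
      = u r₀ + ∑ r, gibbsWeight u lam r * (u r - u r₀) := by
    simp only [mul_sub, sum_sub_distrib, ← sum_mul, sum_gibbsWeight, one_mul]
    ring
  calc ∑ r, gibbsWeight u lam r * u r
      ≤ u r₀ + ∑ r, (s * gibbsWeight u lam r + s * exp (-s / lam)) := by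
        rw [hsplit]; gcongr with r; exact gibbsWeight_mul_sub_le hlam hs r r₀
    _ = u r₀ + s + Fintype.card R * (s * exp (-s / lam)) := by
        rw [sum_add_distrib, ← mul_sum, sum_gibbsWeight, sum_const, card_univ, nsmul_eq_mul]
        ring

end Gibbs

lemma one_le_two_mul_log {x : ℝ} (hx : 2 ≤ x) : 1 ≤ 2 * log x := by
  have := log_le_log two_pos hx
  linarith [log_two_gt_d9]

theorem exponential_mechanism_relative_expectation_bound_general
    {R : Type*} [Fintype R] [Nonempty R] (n : ℕ) (hn : Fintype.card R = n) (hn2 : 2 ≤ n)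
    (u : R → ℝ) (OPT : ℝ) (hOPT : OPT = Finset.univ.inf' Finset.univ_nonempty u)
    (eps lam : ℝ) (hlam : 0 < lam)
    (hlam' : lam ≤ eps * OPT / (3 * Real.log n)) :
    (∑ r : R, (Real.exp (-u r / lam) / ∑ p : R, Real.exp (-u p / lam)) * u r)
      ≤ (1 + eps) * OPT := by
  obtain ⟨r₀, -, hr₀⟩ := exists_mem_eq_inf' univ_nonempty u
  have hn2' : (2 : ℝ) ≤ n := by exact_mod_cast hn2
  have hlog := one_le_two_mul_log hn2'
  have hlog_pos : 0 < log n := by linarith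
  set s := 2 * lam * log n
  have hexp : exp (-s / lam) = (n ^ 2 : ℝ)⁻¹ := by
    rw [show -s / lam = -log ((n : ℝ) ^ 2) by rw [log_pow]; field_simp; push_cast; ring,
      exp_neg, exp_log (by positivity)]
  have hbound := sum_gibbsWeight_mul_le (u := u) hlam (by nlinarith : lam ≤ s) r₀
  rw [hexp, hn, ← hr₀, ← hOPT] at hbound
  have hsn : (n : ℝ) * (s * (n ^ 2 : ℝ)⁻¹) ≤ s / 2 := by
    rw [show (n : ℝ) * (s * (n ^ 2 : ℝ)⁻¹) = s / n by field_simp]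
    exact div_le_div_of_nonneg_left (by positivity) two_pos hn2'
  rw [le_div_iff₀ (by positivity)] at hlam'
  show ∑ r, gibbsWeight u lam r * u r ≤ _
  linarith

/-- **Exponential mechanism, relative-error expectation bound.**
Let `R` be a finite set with `|R| = n ≥ 2`, `u : R → ℝ` with `OPT = min u > 0`,
`ε > 0`, and `0 < lam ≤ ε · OPT / (3 ln n)`.  If `r*` is sampled with probability
proportional to `exp (-u r / lam)`, then `E[u r*] ≤ (1+ε)·OPT`. -/
theorem exponential_mechanism_relative_expectation_bound
    {R : Type*} [Fintype R] [Nonempty R] (n : ℕ) (hn : Fintype.card R = n) (hn2 : 2 ≤ n)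
    (u : R → ℝ) (OPT : ℝ) (hOPT : OPT = Finset.univ.inf' Finset.univ_nonempty u)
    (hOPTpos : 0 < OPT)
    (eps lam : ℝ) (heps : 0 < eps) (hlam : 0 < lam)
    (hlam' : lam ≤ eps * OPT / (3 * Real.log n)) :
    (∑ r : R, (Real.exp (-u r / lam) / ∑ p : R, Real.exp (-u p / lam)) * u r)
      ≤ (1 + eps) * OPT :=
  exponential_mechanism_relative_expectation_bound_general n hn hn2 u OPT hOPT eps lam hlam hlam'
end

section
/- Let (M, d) be a metric space, P = {x₁,…,xₙ} ⊆ M a finite set of n ≥ 3 distinct points, and S ⊆ M a finite set. Define c(x) = COST(P, {x} ∪ S) for x ∈ P, let x̄ minimize c over P, let ε > 0, and let λ > 0 satisfy λ ≥ ε·c(x̄)/(6 ln n) and DIST(xᵢ, {x} ∪ S) ≤ λ for all i ∈ {1,…,n} and all x ∈ P. Let w(x) = exp(−c(x)/λ)/Σ_{p∈P} exp(−c(p)/λ) be the softmax distribution on P. Then Σ_{i=1}^{n} Σ_{x∈P, x≠xᵢ} w(x)·(exp(DIST(xᵢ, {x} ∪ S)/λ) − 1) ≤ (e−1)·(6/ε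 + 2)·ln n. -/
open Finset

/-- `DIST p ({x} ∪ S)`: the minimum distance from `p` to the finite set `{x} ∪ S`. -/
noncomputable def DISTins {M : Type*} [MetricSpace M] [DecidableEq M] (p x : M) (S : Finset M) : ℝ :=
  (insert x S).inf' (Finset.insert_nonempty x S) (fun c => dist p c)

/-- `COST P ({x} ∪ S) = Σ_{p ∈ P} DIST p ({x} ∪ S)`. -/
noncomputable def COSTins {M : Type*} [MetricSpace M] [DecidableEq M] (P : Finset M) (x : M) (S : Finset M) : ℝ :=
  ∑ p ∈ P, DISTins p x S

lemma exp_sub_one_le_aux {t : ℝ} (h0 : 0 ≤ t) (h1 : t ≤ 1) :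
    Real.exp t - 1 ≤ (Real.exp 1 - 1) * t := by
  have hc := convexOn_exp.2 (Set.mem_univ (0:ℝ)) (Set.mem_univ (1:ℝ))
      (by linarith : (0:ℝ) ≤ 1 - t) h0 (by ring)
  simp only [smul_eq_mul, mul_zero, mul_one, zero_add, Real.exp_zero] at hc
  nlinarith

lemma texp_mono_aux {L t : ℝ} (hL : 1 ≤ L) (ht : L ≤ t) :
    Real.exp (-t) * t ≤ Real.exp (-L) * L := by
  have h1 := Real.add_one_le_exp (t - L)
  have h2 : Real.exp (-t) * Real.exp (t - L) = Real.exp (-L) := by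
    rw [← Real.exp_add]; ring_nf
  have h3 : (0:ℝ) < Real.exp (-t) := Real.exp_pos _
  have e1 : t ≤ (1 + (t - L)) * L := by
    nlinarith [mul_nonneg (by linarith : (0:ℝ) ≤ L - 1) (by linarith : (0:ℝ) ≤ t - L)]
  have e2 : (1 + (t - L)) * L ≤ Real.exp (t - L) * L :=
    mul_le_mul_of_nonneg_right (by linarith) (by linarith)
  calc Real.exp (-t) * t ≤ Real.exp (-t) * ((1 + (t - L)) * L) :=
        mul_le_mul_of_nonneg_left e1 h3.le
    _ ≤ Real.exp (-t) * (Real.exp (t - L) * L) :=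
        mul_le_mul_of_nonneg_left e2 h3.le
    _ = Real.exp (-L) * L := by rw [← h2]; ring

lemma gibbs_bound_aux {α : Type*} (P : Finset α) (c : α → ℝ) (xbar : α)
    (hx : xbar ∈ P) (hmin : ∀ y ∈ P, c xbar ≤ c y) (lam L : ℝ)
    (hlam : 0 < lam) (hL1 : 1 ≤ L) (hcard : (P.card : ℝ) * Real.exp (-L) ≤ 1) :
    ∑ y ∈ P, (Real.exp (-(c y)/lam) / ∑ p ∈ P, Real.exp (-(c p)/lam)) * c y
      ≤ c xbar + 2 * (lam * L) := by
  have hL0 : (0:ℝ) < L := lt_of_lt_of_le one_pos hL1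
  set Z : ℝ := ∑ p ∈ P, Real.exp (-(c p)/lam) with hZ
  have hZpos : 0 < Z := Finset.sum_pos (fun p _ => Real.exp_pos _) ⟨xbar, hx⟩
  have hZge : Real.exp (-(c xbar)/lam) ≤ Z :=
    Finset.single_le_sum (f := fun p => Real.exp (-(c p)/lam))
      (fun p _ => (Real.exp_pos _).le) hx
  have hsumw : ∑ y ∈ P, Real.exp (-(c y)/lam) / Z = 1 := by
    rw [← Finset.sum_div, ← hZ, div_self hZpos.ne']
  have hterm : ∀ y ∈ P, (Real.exp (-(c y)/lam) / Z) * c y ≤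
      (Real.exp (-(c y)/lam) / Z) * (c xbar + lam * L) + lam * (Real.exp (-L) * L) := by
    intro y hy
    have hw0 : 0 ≤ Real.exp (-(c y)/lam) / Z := div_nonneg (Real.exp_pos _).le hZpos.le
    have hcy : c xbar ≤ c y := hmin y hy
    by_cases hcase : c y - c xbar ≤ lam * L
    · nlinarith [mul_pos hlam (by positivity : (0:ℝ) < Real.exp (-L) * L)]
    · push_neg at hcase
      set t : ℝ := (c y - c xbar) / lam with htdef
      have htL : L ≤ t := by
        rw [htdef, le_div_iff₀ hlam]; nlinarith
      have hct : c y - c xbar = lam * t := by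
        rw [htdef]; field_simp
      have hwle : Real.exp (-(c y)/lam) / Z ≤ Real.exp (-t) := by
        have h1 : Real.exp (-(c y)/lam) / Z ≤
            Real.exp (-(c y)/lam) / Real.exp (-(c xbar)/lam) :=
          div_le_div_of_nonneg_left (Real.exp_pos _).le (Real.exp_pos _) hZge
        have h2 : Real.exp (-(c y)/lam) / Real.exp (-(c xbar)/lam) = Real.exp (-t) := by
          rw [← Real.exp_sub]; congr 1
          rw [htdef]; field_simp; ring
        linarith [h2.le, h2.ge]
      have hkey : Real.exp (-t) * t ≤ Real.exp (-L) * L := texp_mono_aux hL1 htL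
      have ht0 : 0 ≤ t := le_trans hL0.le htL
      have hmain : (Real.exp (-(c y)/lam) / Z) * (c y - c xbar) ≤
          lam * (Real.exp (-L) * L) := by
        rw [hct]
        calc (Real.exp (-(c y)/lam) / Z) * (lam * t) ≤ Real.exp (-t) * (lam * t) :=
              mul_le_mul_of_nonneg_right hwle (by positivity)
          _ = lam * (Real.exp (-t) * t) := by ring
          _ ≤ lam * (Real.exp (-L) * L) := by nlinarith
      nlinarith [mul_nonneg hw0 (mul_pos hlam hL0).le]
  calc ∑ y ∈ P, (Real.exp (-(c y)/lam) / Z) * c y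
      ≤ ∑ y ∈ P, ((Real.exp (-(c y)/lam) / Z) * (c xbar + lam * L)
          + lam * (Real.exp (-L) * L)) := Finset.sum_le_sum hterm
    _ = (∑ y ∈ P, Real.exp (-(c y)/lam) / Z) * (c xbar + lam * L)
          + (P.card : ℝ) * (lam * (Real.exp (-L) * L)) := by
        rw [Finset.sum_add_distrib, ← Finset.sum_mul, Finset.sum_const, nsmul_eq_mul]
    _ ≤ c xbar + 2 * (lam * L) := by
        rw [hsumw, one_mul]
        nlinarith [mul_le_mul_of_nonneg_right hcard (mul_pos hlam hL0).le]

/-- Let `P = {x₁, …, xₙ}` (`n ≥ 3` distinct points) and `S` a finite set in a metric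
space.  Let `c y = COST(P, {y} ∪ S)`, let `x̄` minimize `c` over `P`, let `ε > 0`, and
let `lam > 0` satisfy `lam ≥ ε · c x̄ / (6 ln n)` and `DIST(xᵢ, {y} ∪ S) ≤ lam` for all
`i` and all `y ∈ P`.  Let `w y = exp (-c y / lam) / Σ_{p ∈ P} exp (-c p / lam)` be the
softmax distribution on `P`.  Then
`Σ_{i=1}^{n} Σ_{y ∈ P, y ≠ xᵢ} w y · (exp (DIST(xᵢ, {y} ∪ S) / lam) - 1)
  ≤ (e - 1) · (6/ε + 2) · ln n`. -/
theorem softmax_double_sum_bound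
    {M : Type*} [MetricSpace M] [DecidableEq M] (n : ℕ) (hn : 3 ≤ n)
    (x : Fin n → M) (hinj : Function.Injective x)
    (S : Finset M) (P : Finset M) (hP : P = Finset.image x Finset.univ)
    (xbar : M) (hxbarmem : xbar ∈ P)
    (hxbarmin : ∀ y ∈ P, COSTins P xbar S ≤ COSTins P y S)
    (eps lam : ℝ) (heps : 0 < eps) (hlam : 0 < lam)
    (hlamlb : eps * COSTins P xbar S / (6 * Real.log n) ≤ lam)
    (hdistlam : ∀ i : Fin n, ∀ y ∈ P, DISTins (x i) y S ≤ lam) :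
    ∑ i : Fin n, ∑ y ∈ P.erase (x i),
        (Real.exp (-(COSTins P y S) / lam) /
            ∑ p ∈ P, Real.exp (-(COSTins P p S) / lam)) *
          (Real.exp (DISTins (x i) y S / lam) - 1)
      ≤ (Real.exp 1 - 1) * (6 / eps + 2) * Real.log n := by
  have hn0 : (0:ℝ) < n := by
    have : (3:ℝ) ≤ n := by exact_mod_cast hn
    linarith
  set L : ℝ := Real.log n with hLdef
  have hL1 : 1 ≤ L := by
    rw [hLdef, Real.le_log_iff_exp_le hn0]
    have h3 : (3:ℝ) ≤ n := by exact_mod_cast hn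
    nlinarith [Real.exp_one_lt_d9]
  have hL0 : (0:ℝ) < L := lt_of_lt_of_le one_pos hL1
  have hcardP : P.card = n := by
    rw [hP, Finset.card_image_of_injective _ hinj, Finset.card_univ, Fintype.card_fin]
  have hcard : (P.card : ℝ) * Real.exp (-L) ≤ 1 := by
    rw [hcardP, hLdef, Real.exp_neg, Real.exp_log hn0]
    rw [mul_inv_le_iff₀ hn0, one_mul]
  have hD0 : ∀ p y : M, 0 ≤ DISTins p y S := by
    intro p y
    exact Finset.le_inf' _ _ (fun c _ => dist_nonneg)
  have hsum_c : ∀ y : M, (∑ i : Fin n, DISTins (x i) y S) = COSTins P y S := by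
    intro y
    rw [COSTins, hP, Finset.sum_image (fun a _ b _ h => hinj h)]
  set Z : ℝ := ∑ p ∈ P, Real.exp (-(COSTins P p S) / lam) with hZ
  have hZpos : 0 < Z := Finset.sum_pos (fun p _ => Real.exp_pos _) ⟨xbar, hxbarmem⟩
  have hw0 : ∀ y : M, 0 ≤ Real.exp (-(COSTins P y S) / lam) / Z :=
    fun y => div_nonneg (Real.exp_pos _).le hZpos.le
  have hA : (0:ℝ) ≤ Real.exp 1 - 1 := by nlinarith [Real.add_one_le_exp (1:ℝ)]
  have hgibbs : ∑ y ∈ P, (Real.exp (-(COSTins P y S) / lam) / Z) * COSTins P y S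
      ≤ COSTins P xbar S + 2 * (lam * L) :=
    gibbs_bound_aux P (fun y => COSTins P y S) xbar hxbarmem hxbarmin lam L hlam hL1 hcard
  have hcmin_le : COSTins P xbar S ≤ lam * (6 * L) / eps := by
    rw [le_div_iff₀ heps]
    have h6 : (0:ℝ) < 6 * L := by linarith
    rw [div_le_iff₀ h6] at hlamlb
    nlinarith
  calc ∑ i : Fin n, ∑ y ∈ P.erase (x i),
        (Real.exp (-(COSTins P y S) / lam) / Z) * (Real.exp (DISTins (x i) y S / lam) - 1)
      ≤ ∑ i : Fin n, ∑ y ∈ P,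
        (Real.exp (-(COSTins P y S) / lam) / Z) *
          ((Real.exp 1 - 1) * (DISTins (x i) y S / lam)) := by
        apply Finset.sum_le_sum
        intro i _
        calc ∑ y ∈ P.erase (x i),
              (Real.exp (-(COSTins P y S) / lam) / Z) *
                (Real.exp (DISTins (x i) y S / lam) - 1)
            ≤ ∑ y ∈ P.erase (x i),
              (Real.exp (-(COSTins P y S) / lam) / Z) *
                ((Real.exp 1 - 1) * (DISTins (x i) y S / lam)) := by
              apply Finset.sum_le_sum
              intro y hy
              have hyP : y ∈ P := Finset.mem_of_mem_erase hy
              have h0 : 0 ≤ DISTins (x i) y S / lam := div_nonneg (hD0 _ _) hlam.le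
              have h1 : DISTins (x i) y S / lam ≤ 1 :=
                (div_le_one hlam).mpr (hdistlam i y hyP)
              exact mul_le_mul_of_nonneg_left (exp_sub_one_le_aux h0 h1) (hw0 y)
          _ ≤ ∑ y ∈ P,
              (Real.exp (-(COSTins P y S) / lam) / Z) *
                ((Real.exp 1 - 1) * (DISTins (x i) y S / lam)) := by
              apply Finset.sum_le_sum_of_subset_of_nonneg (Finset.erase_subset _ _)
              intro y hy _
              exact mul_nonneg (hw0 y)
                (mul_nonneg hA (div_nonneg (hD0 _ _) hlam.le))
    _ = (Real.exp 1 - 1) / lam *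
          ∑ y ∈ P, (Real.exp (-(COSTins P y S) / lam) / Z) * COSTins P y S := by
        rw [Finset.sum_comm, Finset.mul_sum]
        apply Finset.sum_congr rfl
        intro y _
        rw [← hsum_c y, Finset.mul_sum, Finset.mul_sum]
        apply Finset.sum_congr rfl
        intro i _
        ring
    _ ≤ (Real.exp 1 - 1) / lam * (COSTins P xbar S + 2 * (lam * L)) :=
        mul_le_mul_of_nonneg_left hgibbs (div_nonneg hA hlam.le)
    _ ≤ (Real.exp 1 - 1) / lam * (lam * (6 * L) / eps + 2 * (lam * L)) := by
        apply mul_le_mul_of_nonneg_left _ (div_nonneg hA hlam.le)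
        linarith
    _ = (Real.exp 1 - 1) * (6 / eps + 2) * L := by
        field_simp
end

section
/- For real numbers 0 < a ≤ b, let μ_a denote the uniform probability measure on the interval [a, 2a] (i.e., Lebesgue measure restricted to [a,2a] normalized by 1/a) and μ_b the uniform probability measure on [b, 2b]. Then for every measurable set s ⊆ ℝ, |μ_a(s) − μ_b(s)| ≤ 2(b − a)/b. -/
open MeasureTheory

/-- The uniform probability measure on `[c, 2c]` (`c > 0`): Lebesgue measure restricted
to `[c, 2c]`, normalized by the factor `1/c`. -/
noncomputable def uniformOn (c : ℝ) : Measure ℝ :=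
  (ENNReal.ofReal (1 / c)) • (volume.restrict (Set.Icc c (2 * c)))

/-- For `0 < a ≤ b`, the uniform probability measures on `[a, 2a]` and `[b, 2b]` differ
on every measurable set by at most `2 (b - a) / b`. -/
theorem uniform_measures_close
    (a b : ℝ) (ha : 0 < a) (hab : a ≤ b) (s : Set ℝ) (hs : MeasurableSet s) :
    |(uniformOn a s).toReal - (uniformOn b s).toReal| ≤ 2 * (b - a) / b := by
  have hb : 0 < b := lt_of_lt_of_le ha hab
  set VA := volume (s ∩ Set.Icc a (2 * a)) with hVAdef
  set VB := volume (s ∩ Set.Icc b (2 * b)) with hVBdef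
  have hVAle : VA ≤ ENNReal.ofReal a := by
    calc VA ≤ volume (Set.Icc a (2 * a)) := measure_mono Set.inter_subset_right
      _ = ENNReal.ofReal a := by rw [Real.volume_Icc]; ring_nf
  have hVBle : VB ≤ ENNReal.ofReal b := by
    calc VB ≤ volume (Set.Icc b (2 * b)) := measure_mono Set.inter_subset_right
      _ = ENNReal.ofReal b := by rw [Real.volume_Icc]; ring_nf
  have hfinB : VB ≠ ⊤ := (lt_of_le_of_lt hVBle ENNReal.ofReal_lt_top).ne
  have hfinA : VA ≠ ⊤ := (lt_of_le_of_lt hVAle ENNReal.ofReal_lt_top).ne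
  have h1 : VA ≤ VB + ENNReal.ofReal (b - a) := by
    calc VA ≤ volume ((s ∩ Set.Icc b (2 * b)) ∪ Set.Ico a b) := by
          apply measure_mono
          intro t ⟨hts, hta, ht2a⟩
          by_cases htb : b ≤ t
          · exact Or.inl ⟨hts, htb, le_trans ht2a (by linarith)⟩
          · exact Or.inr ⟨hta, lt_of_not_ge htb⟩
      _ ≤ VB + volume (Set.Ico a b) := measure_union_le _ _
      _ = VB + ENNReal.ofReal (b - a) := by rw [Real.volume_Ico]
  have h2 : VB ≤ VA + ENNReal.ofReal (2 * (b - a)) := by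
    calc VB ≤ volume ((s ∩ Set.Icc a (2 * a)) ∪ Set.Ioc (2 * a) (2 * b)) := by
          apply measure_mono
          intro t ⟨hts, htb, ht2b⟩
          by_cases ht2a : t ≤ 2 * a
          · exact Or.inl ⟨hts, le_trans hab htb, ht2a⟩
          · exact Or.inr ⟨lt_of_not_ge ht2a, ht2b⟩
      _ ≤ VA + volume (Set.Ioc (2 * a) (2 * b)) := measure_union_le _ _
      _ = VA + ENNReal.ofReal (2 * (b - a)) := by rw [Real.volume_Ioc]; ring_nf
  set x := VA.toReal with hxdef
  set y := VB.toReal with hydef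
  have hx0 : 0 ≤ x := ENNReal.toReal_nonneg
  have hy0 : 0 ≤ y := ENNReal.toReal_nonneg
  have hxa : x ≤ a := ENNReal.toReal_le_of_le_ofReal ha.le hVAle
  have h1r : x ≤ y + (b - a) := by
    have := ENNReal.toReal_mono (by finiteness) h1
    rwa [ENNReal.toReal_add hfinB ENNReal.ofReal_ne_top,
      ENNReal.toReal_ofReal (by linarith)] at this
  have h2r : y ≤ x + 2 * (b - a) := by
    have := ENNReal.toReal_mono (by finiteness) h2
    rwa [ENNReal.toReal_add hfinA ENNReal.ofReal_ne_top,
      ENNReal.toReal_ofReal (by linarith)] at this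
  have huA : (uniformOn a s).toReal = 1 / a * x := by
    rw [uniformOn, Measure.smul_apply, Measure.restrict_apply hs, smul_eq_mul,
      ENNReal.toReal_mul, ENNReal.toReal_ofReal (by positivity)]
  have huB : (uniformOn b s).toReal = 1 / b * y := by
    rw [uniformOn, Measure.smul_apply, Measure.restrict_apply hs, smul_eq_mul,
      ENNReal.toReal_mul, ENNReal.toReal_ofReal (by positivity)]
  rw [huA, huB, abs_le]
  constructor
  · -- y/b - x/a ≤ 2(b-a)/b, using x/b ≤ x/a
    have hxx : x / b ≤ x / a := div_le_div_of_nonneg_left hx0 ha hab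
    have : (y - x) / b ≤ 2 * (b - a) / b := by gcongr; linarith
    rw [sub_div] at this
    have hxa' : x / a = 1 / a * x := by ring
    have hyb' : y / b = 1 / b * y := by ring
    linarith [this, hxx]
  · have key : b * x - a * y ≤ 2 * a * (b - a) := by
      have k1 : a * x ≤ a * (y + (b - a)) := mul_le_mul_of_nonneg_left h1r ha.le
      have k2 : (b - a) * x ≤ (b - a) * a :=
        mul_le_mul_of_nonneg_left hxa (by linarith)
      nlinarith
    have heq : 1 / a * x - 1 / b * y = (b * x - a * y) / (a * b) := by
      field_simp
    rw [heq, div_le_div_iff₀ (by positivity) hb]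
    nlinarith [mul_le_mul_of_nonneg_right key hb.le]
end

section
/- Let Ω be a measurable space, let η and η' be Markov kernels from ℝ to Ω, and let 0 < a ≤ b be real numbers. Let μ_a be the uniform probability measure on [a, 2a] and μ_b the uniform probability measure on [b, 2b]. Then for every measurable set s ⊆ Ω, |(μ_a.bind η)(s) − (μ_b.bind η')(s)| ≤ (1/a)·∫_{a}^{2a} |η(λ)(s) − η'(λ)(s)| dλ + 2(b − a)/b, where μ.bind κ denotes the mixture measure s ↦ ∫ κ(λ)(s) dμ(λ). -/
/-!
Both mixtures are averages of `l ↦ κ l s` over a window `[c, 2c]`. Swapping `η` for `η'` on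
`[a, 2a]` costs the averaged distance. For `G` with values in `[0, 1]`, the averages over
`[a, 2a]` and `[b, 2b]` differ by
`(b - a)/b · (average over [a, 2a]) + (∫_a^b G - ∫_{2a}^{2b} G)/b`,
whose two terms lie in `[0, (b - a)/b]` and `[-2(b - a)/b, (b - a)/b]`.
-/
open MeasureTheory

open Set unitInterval

lemma ProbabilityTheory.Kernel.apply_toReal_mem_unitInterval {α Ω : Type*} [MeasurableSpace α]
    [MeasurableSpace Ω] (κ : ProbabilityTheory.Kernel α Ω)
    [ProbabilityTheory.IsMarkovKernel κ] (x : α) (s : Set Ω) : (κ x s).toReal ∈ I :=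
  ⟨ENNReal.toReal_nonneg, measureReal_le_one⟩

lemma uniformOn_bind_apply_toReal {Ω : Type*} [MeasurableSpace Ω]
    (κ : ProbabilityTheory.Kernel ℝ Ω) [ProbabilityTheory.IsFiniteKernel κ]
    {c : ℝ} (hc : 0 ≤ c) {s : Set Ω} (hs : MeasurableSet s) :
    (((uniformOn c).bind (fun l => κ l)) s).toReal
      = (1 / c) * ∫ l in c..2 * c, (κ l s).toReal := by
  rw [Measure.bind_apply hs κ.measurable.aemeasurable, uniformOn, lintegral_smul_measure,
    smul_eq_mul, ENNReal.toReal_mul, ENNReal.toReal_ofReal (by positivity),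
    intervalIntegral.integral_of_le (by linarith), ← integral_Icc_eq_integral_Ioc,
    integral_toReal (κ.measurable_coe hs).aemeasurable (ae_of_all _ fun l => measure_lt_top _ _)]

section UnitIntervalValued

variable {G : ℝ → ℝ}

lemma intervalIntegrable_of_mem_unitInterval (hG : Measurable G) (hG01 : ∀ x, G x ∈ I)
    (x y : ℝ) : IntervalIntegrable G volume x y :=
  (intervalIntegrable_const (c := (1 : ℝ))).mono_fun hG.aestronglyMeasurable
    (ae_of_all _ fun t => by simpa [abs_of_nonneg (hG01 t).1] using (hG01 t).2)

lemma intervalIntegral_mem_Icc_of_mem_unitInterval (hG : Measurable G) (hG01 : ∀ x, G x ∈ I)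
    {x y : ℝ} (hxy : x ≤ y) : ∫ l in x..y, G l ∈ Icc 0 (y - x) := by
  refine ⟨intervalIntegral.integral_nonneg hxy fun t _ => (hG01 t).1, ?_⟩
  calc ∫ l in x..y, G l ≤ ∫ _ in x..y, (1 : ℝ) :=
        intervalIntegral.integral_mono_on hxy (intervalIntegrable_of_mem_unitInterval hG hG01 x y)
          intervalIntegrable_const fun t _ => (hG01 t).2
    _ = y - x := by simp

lemma abs_average_sub_average_le_of_mem_unitInterval (hG : Measurable G) (hG01 : ∀ x, G x ∈ I)
    {a b : ℝ} (ha : 0 < a) (hab : a ≤ b) :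
    |(1 / a) * (∫ l in a..2 * a, G l) - (1 / b) * ∫ l in b..2 * b, G l|
      ≤ 2 * (b - a) / b := by
  have hb : 0 < b := ha.trans_le hab
  have hint := intervalIntegrable_of_mem_unitInterval hG hG01
  have hmem {x y : ℝ} (hxy : x ≤ y) := intervalIntegral_mem_Icc_of_mem_unitInterval hG hG01 hxy
  obtain ⟨hIa0, hIa1⟩ := hmem (show a ≤ 2 * a by linarith)
  obtain ⟨hY0, hY1⟩ := hmem hab
  obtain ⟨hZ0, hZ1⟩ := hmem (show 2 * a ≤ 2 * b by linarith)
  set Ia := ∫ l in a..2 * a, G l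
  set Ib := ∫ l in b..2 * b, G l
  set Y := ∫ l in a..b, G l
  set Z := ∫ l in 2 * a..2 * b, G l
  have hshift : Ia - Ib = Y - Z :=
    intervalIntegral.integral_interval_sub_interval_comm (hint _ _) (hint _ _) (hint _ _)
  have hdecomp : (1 / a) * Ia - (1 / b) * Ib = (b - a) / b * (Ia / a) + (Y - Z) / b := by
    field_simp
    linear_combination a * hshift
  have hav : Ia / a ∈ I := ⟨by positivity, by rw [div_le_one ha]; linarith⟩
  have hX : (b - a) / b * (Ia / a) ∈ Icc 0 ((b - a) / b) :=
    ⟨by have := hav.1; positivity, mul_le_of_le_one_right (by positivity) hav.2⟩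
  have hYZ : (Y - Z) / b ∈ Icc (-(2 * (b - a) / b)) ((b - a) / b) := by
    constructor
    · rw [← neg_div]; exact div_le_div_of_nonneg_right (by linarith) hb.le
    · exact div_le_div_of_nonneg_right (by linarith) hb.le
  have htwo : 2 * (b - a) / b = (b - a) / b + (b - a) / b := by ring
  rw [hdecomp, abs_le]
  constructor <;> linarith [hX.1, hX.2, hYZ.1, hYZ.2]

end UnitIntervalValued

/-- Let `η, η'` be Markov kernels from `ℝ` to a measurable space `Ω` and `0 < a ≤ b`.
Mixing `η` over the uniform measure on `[a, 2a]` and `η'` over the uniform measure on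
`[b, 2b]`, the two resulting measures differ on every measurable set `s` by at most
`(1/a) ∫_{a}^{2a} |η(λ)(s) - η'(λ)(s)| dλ + 2 (b - a) / b`. -/
theorem mixture_kernels_close
    {Ω : Type*} [MeasurableSpace Ω]
    (η η' : ProbabilityTheory.Kernel ℝ Ω)
    [ProbabilityTheory.IsMarkovKernel η] [ProbabilityTheory.IsMarkovKernel η']
    (a b : ℝ) (ha : 0 < a) (hab : a ≤ b)
    (s : Set Ω) (hs : MeasurableSet s) :
    |(((uniformOn a).bind (fun l => η l)) s).toReal
        - (((uniformOn b).bind (fun l => η' l)) s).toReal|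
      ≤ (1 / a) * (∫ l in Set.Icc a (2 * a), |((η l) s).toReal - ((η' l) s).toReal|)
          + 2 * (b - a) / b := by
  have hb : 0 < b := ha.trans_le hab
  have hF := (η.measurable_coe hs).ennreal_toReal
  have hG := (η'.measurable_coe hs).ennreal_toReal
  have hF01 := η.apply_toReal_mem_unitInterval (s := s)
  have hG01 := η'.apply_toReal_mem_unitInterval (s := s)
  rw [uniformOn_bind_apply_toReal η ha.le hs, uniformOn_bind_apply_toReal η' hb.le hs,
    integral_Icc_eq_integral_Ioc, ← intervalIntegral.integral_of_le (by linarith)]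
  have hswap : |(1 / a) * (∫ l in a..2 * a, (η l s).toReal)
      - (1 / a) * ∫ l in a..2 * a, (η' l s).toReal|
      ≤ (1 / a) * ∫ l in a..2 * a, |(η l s).toReal - (η' l s).toReal| := by
    rw [← mul_sub, abs_mul, abs_of_pos (one_div_pos.2 ha), ← intervalIntegral.integral_sub
      (intervalIntegrable_of_mem_unitInterval hF hF01 _ _)
      (intervalIntegrable_of_mem_unitInterval hG hG01 _ _)]
    gcongr
    exact intervalIntegral.abs_integral_le_integral_abs (by linarith)
  calc _ ≤ _ + _ := abs_sub_le _ ((1 / a) * ∫ l in a..2 * a, (η' l s).toReal) _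
    _ ≤ _ := add_le_add hswap (abs_average_sub_average_le_of_mem_unitInterval hG hG01 ha hab)
end

section
/- Let (M, d) be a metric space, C ⊆ M a finite set with |C| ≥ 2, x ∈ C, and w ≥ 0 a real number. For a threshold t ≥ 0 and a set A ⊆ M, let G_t(A) be the simple graph on vertex set A in which distinct a, b ∈ A are adjacent if and only if d(a, b) ≤ t. If G_w(C) is connected and C∖{x} is nonempty, then G_{2w}(C∖{x}) is connected. -/
/-- The threshold graph `G_t(A)` on a finite set `A` in a metric space: distinct points
`a, b ∈ A` are adjacent iff `dist a b ≤ t`. -/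
def threshGraph {M : Type*} [MetricSpace M] (A : Finset M) (t : ℝ) :
    SimpleGraph {a // a ∈ A} where
  Adj a b := a ≠ b ∧ dist (a : M) (b : M) ≤ t
  symm := by
    constructor
    intro a b h
    exact ⟨h.1.symm, by rw [dist_comm]; exact h.2⟩
  loopless := by
    constructor
    intro a h
    exact h.1 rfl

/-!
Fix a neighbour `y` of `x` in `G_w(C)` and retract `C` onto `C \ {x}` by sending `x` to `y`.
By the triangle inequality through `x`, the retraction maps every edge of `G_w(C)` to a point
or to an edge of `G_{2w}(C \ {x})`, so it carries walks of `G_w(C)` to walks of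
`G_{2w}(C \ {x})`; since it fixes `C \ {x}`, connectivity passes to `G_{2w}(C \ {x})`.
-/

theorem SimpleGraph.Reachable.map_of_eq_or_adj {V W : Type*} {G : SimpleGraph V}
    {H : SimpleGraph W} (f : V → W) (hf : ∀ ⦃u v⦄, G.Adj u v → f u = f v ∨ H.Adj (f u) (f v))
    {u v : V} (h : G.Reachable u v) : H.Reachable (f u) (f v) := by
  rw [reachable_iff_reflTransGen] at h ⊢
  refine h.lift' f fun a b hab => ?_
  rcases hf hab with heq | hadj
  · show Relation.ReflTransGen H.Adj (f a) (f b)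
    rw [heq]
  · exact .single hadj

theorem threshGraph_eq_or_adj_of_dist_le {M : Type*} [MetricSpace M] {A : Finset M} {t : ℝ}
    {a b : {a // a ∈ A}} (h : dist (a : M) b ≤ t) : a = b ∨ (threshGraph A t).Adj a b := by
  by_cases hab : a = b
  · exact .inl hab
  · exact .inr ⟨hab, h⟩

section Retract

variable {M : Type*} [DecidableEq M] {C : Finset M} {x y : M}

def retractErase (C : Finset M) (x y : M) (hy : y ∈ C.erase x) :
    {a // a ∈ C} → {a // a ∈ C.erase x} :=
  fun a => if ha : (a : M) = x then ⟨y, hy⟩ else ⟨a, Finset.mem_erase.2 ⟨ha, a.2⟩⟩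

theorem coe_retractErase (hy : y ∈ C.erase x) (a : {a // a ∈ C}) :
    (retractErase C x y hy a : M) = if (a : M) = x then y else a := by
  unfold retractErase
  split_ifs <;> rfl

theorem retractErase_of_mem_erase (hy : y ∈ C.erase x) (a : {a // a ∈ C.erase x}) :
    retractErase C x y hy ⟨a, Finset.mem_of_mem_erase a.2⟩ = a :=
  Subtype.ext <| by simp [coe_retractErase, Finset.ne_of_mem_erase a.2]

theorem dist_retractErase_le [MetricSpace M] (hy : y ∈ C.erase x) {w : ℝ} (hxy : dist x y ≤ w)
    {u v : {a // a ∈ C}} (huv : dist (u : M) v ≤ w) :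
    dist (retractErase C x y hy u : M) (retractErase C x y hy v) ≤ 2 * w := by
  have hw : 0 ≤ w := dist_nonneg.trans hxy
  rw [coe_retractErase, coe_retractErase]
  split_ifs with hu hv hv
  · simpa using hw
  · subst hu
    calc dist y v ≤ dist y u + dist (u : M) v := dist_triangle _ _ _
      _ ≤ 2 * w := by rw [dist_comm]; linarith
  · subst hv
    calc dist (u : M) y ≤ dist (u : M) v + dist (v : M) y := dist_triangle _ _ _
      _ ≤ 2 * w := by linarith
  · linarith

end Retract

theorem threshGraph_erase_connected_general
    {M : Type*} [MetricSpace M] [DecidableEq M]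
    (C : Finset M) (x : M) (hx : x ∈ C) (w : ℝ)
    (hconn : (threshGraph C w).Connected) (hne : (C.erase x).Nonempty) :
    (threshGraph (C.erase x) (2 * w)).Connected := by
  obtain ⟨v, hv⟩ := hne
  have : Nontrivial {a // a ∈ C} :=
    nontrivial_of_ne ⟨v, Finset.mem_of_mem_erase hv⟩ ⟨x, hx⟩
      (by simpa using Finset.ne_of_mem_erase hv)
  obtain ⟨y, hxy⟩ := SimpleGraph.exists_adj_iff_not_isIsolated.2
    (hconn.preconnected.not_isIsolated ⟨x, hx⟩)
  have hy : (y : M) ∈ C.erase x := Finset.mem_erase.2 ⟨fun h => hxy.1 (Subtype.ext h.symm), y.2⟩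
  have : Nonempty {a // a ∈ C.erase x} := ⟨⟨v, hv⟩⟩
  refine ⟨fun a b => ?_⟩
  have hreach := (hconn.preconnected ⟨a, Finset.mem_of_mem_erase a.2⟩
    ⟨b, Finset.mem_of_mem_erase b.2⟩).map_of_eq_or_adj (retractErase C x y hy)
    fun u v (huv : (threshGraph C w).Adj u v) =>
      threshGraph_eq_or_adj_of_dist_le (dist_retractErase_le hy hxy.2 huv.2)
  rwa [retractErase_of_mem_erase, retractErase_of_mem_erase] at hreach

/-- Let `C` be a finite set with `|C| ≥ 2` in a metric space, `x ∈ C`, and `w ≥ 0`.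
If the threshold graph `G_w(C)` is connected and `C \ {x}` is nonempty, then the
threshold graph `G_{2w}(C \ {x})` is connected. -/
theorem threshGraph_erase_connected
    {M : Type*} [MetricSpace M] [DecidableEq M]
    (C : Finset M) (hC : 2 ≤ C.card) (x : M) (hx : x ∈ C) (w : ℝ) (hw : 0 ≤ w)
    (hconn : (threshGraph C w).Connected) (hne : (C.erase x).Nonempty) :
    (threshGraph (C.erase x) (2 * w)).Connected :=
  threshGraph_erase_connected_general C x hx w hconn hne
end

section
/- Let n ≥ 7 be an integer. Consider the 2-clustering {A₁, A₂} of {1,…,n} with A₁ = {1,…,n−1} and A₂ = {n}, and for each i ∈ {1,…,n−1} the 2-clustering {B₁⁽ⁱ⁾, B₂⁽ⁱ⁾} of {1,…,n}∖{i} with B₁⁽ⁱ⁾ = {1,…,i−1} and B₂⁽ⁱ⁾ = {i+1,…,n}. Then (1/n)·Σ_{i=1}^{n−1} min( |A₁ △ B₁⁽ⁱ⁾| + |A₂ △ B₂⁽ⁱ⁾| , |A₁ △ B₂⁽ⁱ⁾| + |A₂ △ B₁⁽ⁱ⁾| ) ≥ n/8. (These are the 2-clusterings that single linkage produces on the line dataset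 of n nearly equidistant points and on that dataset with point i deleted, so the average sensitivity of single linkage is Ω(n).) -/
open Finset

lemma single_linkage_sum_lower (n : ℕ) (hn : 7 ≤ n) :
    n * n ≤ (∑ i ∈ Finset.Icc 1 (n - 1), min ((n - i) + (n - 1 - i)) ((i + 1) + i)) * 8 := by
  set k := n / 4 with hk
  set m := n / 2 with hm
  have hsub : Finset.Icc (k+1) m ⊆ Finset.Icc 1 (n-1) := by
    intro x hx; simp only [mem_Icc] at *; omega
  have h1 : ∑ i ∈ Finset.Icc (k+1) m, min ((n - i) + (n - 1 - i)) ((i + 1) + i)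
      ≤ ∑ i ∈ Finset.Icc 1 (n - 1), min ((n - i) + (n - 1 - i)) ((i + 1) + i) :=
    Finset.sum_le_sum_of_subset hsub
  have h2 : (Finset.Icc (k+1) m).card • (2*k+3)
      ≤ ∑ i ∈ Finset.Icc (k+1) m, min ((n - i) + (n - 1 - i)) ((i + 1) + i) := by
    apply Finset.card_nsmul_le_sum
    intro i hi; simp only [mem_Icc] at hi; omega
  rw [Nat.card_Icc, smul_eq_mul] at h2
  have hc : m + 1 - (k + 1) = m - k := by omega
  rw [hc] at h2
  have hd : n ≤ 4 * (m - k) + 2 := by omega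
  have hk3 : n ≤ 4 * k + 3 := by omega
  have hk4 : 4 * k ≤ n := by omega
  nlinarith [Nat.mul_le_mul hd hk3, h1, h2]

/-- **Average sensitivity of single linkage is `Ω(n)`.**
Let `n ≥ 7`.  Consider the 2-clustering `{A₁, A₂}` of `{1, …, n}` with
`A₁ = {1, …, n-1}`, `A₂ = {n}`, and for each `i ∈ {1, …, n-1}` the 2-clustering
`{B₁⁽ⁱ⁾, B₂⁽ⁱ⁾}` of `{1, …, n} \ {i}` with `B₁⁽ⁱ⁾ = {1, …, i-1}`,
`B₂⁽ⁱ⁾ = {i+1, …, n}`.  Then the average over `i` (normalized by `n`) of the minimum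
matching cost between the clusterings, measured by symmetric differences, is at least
`n / 8`. -/
theorem single_linkage_average_sensitivity (n : ℕ) (hn : 7 ≤ n) :
    (n : ℝ) / 8 ≤ (1 / (n : ℝ)) * ∑ i ∈ Finset.Icc 1 (n - 1),
      ((min
        ((symmDiff (Finset.Icc 1 (n - 1)) (Finset.Icc 1 (i - 1))).card
          + (symmDiff ({n} : Finset ℕ) (Finset.Icc (i + 1) n)).card)
        ((symmDiff (Finset.Icc 1 (n - 1)) (Finset.Icc (i + 1) n)).card
          + (symmDiff ({n} : Finset ℕ) (Finset.Icc 1 (i - 1))).card) : ℕ) : ℝ) := by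
  have hsum : ∑ i ∈ Finset.Icc 1 (n - 1),
      ((min
        ((symmDiff (Finset.Icc 1 (n - 1)) (Finset.Icc 1 (i - 1))).card
          + (symmDiff ({n} : Finset ℕ) (Finset.Icc (i + 1) n)).card)
        ((symmDiff (Finset.Icc 1 (n - 1)) (Finset.Icc (i + 1) n)).card
          + (symmDiff ({n} : Finset ℕ) (Finset.Icc 1 (i - 1))).card) : ℕ) : ℝ)
      = ((∑ i ∈ Finset.Icc 1 (n - 1), min ((n - i) + (n - 1 - i)) ((i + 1) + i) : ℕ) : ℝ) := by
    rw [Nat.cast_sum]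
    apply Finset.sum_congr rfl
    intro i hi
    simp only [mem_Icc] at hi
    obtain ⟨h1, h2⟩ := hi
    have c1 : (symmDiff (Finset.Icc 1 (n - 1)) (Finset.Icc 1 (i - 1))).card = n - i := by
      have : symmDiff (Finset.Icc 1 (n - 1)) (Finset.Icc 1 (i - 1)) = Finset.Icc i (n-1) := by
        ext x; simp [Finset.mem_symmDiff]; omega
      rw [this, Nat.card_Icc]; omega
    have c2 : (symmDiff ({n} : Finset ℕ) (Finset.Icc (i + 1) n)).card = n - 1 - i := by
      have : symmDiff ({n} : Finset ℕ) (Finset.Icc (i + 1) n) = Finset.Icc (i+1) (n-1) := by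
        ext x; simp [Finset.mem_symmDiff]; omega
      rw [this, Nat.card_Icc]; omega
    have c3 : (symmDiff (Finset.Icc 1 (n - 1)) (Finset.Icc (i + 1) n)).card = i + 1 := by
      have : symmDiff (Finset.Icc 1 (n - 1)) (Finset.Icc (i + 1) n)
          = insert n (Finset.Icc 1 i) := by
        ext x; simp [Finset.mem_symmDiff]; omega
      rw [this, Finset.card_insert_of_notMem (by simp; omega), Nat.card_Icc]; omega
    have c4 : (symmDiff ({n} : Finset ℕ) (Finset.Icc 1 (i - 1))).card = i := by
      have : symmDiff ({n} : Finset ℕ) (Finset.Icc 1 (i - 1))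
          = insert n (Finset.Icc 1 (i-1)) := by
        ext x; simp [Finset.mem_symmDiff]; omega
      rw [this, Finset.card_insert_of_notMem (by simp; omega), Nat.card_Icc]; omega
    rw [c1, c2, c3, c4]
  rw [hsum, one_div, inv_mul_eq_div, div_le_div_iff₀ (by norm_num : (0:ℝ) < 8)
    (by positivity : (0:ℝ) < n)]
  exact_mod_cast single_linkage_sum_lower n hn
end
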